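/- For bi-periodic Fibonacci polynomials and m, n ≥ 1 with m + n even, q_{m+n}(x) = q_{m+1}(x) q_n(x) + q_m(x) q_{n−1}(x). -/

import Mathlib

/-! Shifting one unit from `m` to `n` preserves the identity, because the recurrence
coefficients at `m + 2` and `n + 2` agree when `m + n` is even; so it reduces to `n = 0`. -/

/-- Bi-periodic Fibonacci polynomials (evaluated at x): q 0 = 0, q 1 = 1,
    q n = a*x*q (n-1) + q (n-2) if n odd, q n = b*x*q (n-1) + q (n-2) if n even. -/
def bpFibP (a b x : ℝ) : ℕ → ℝ
  | 0 => 0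
  | 1 => 1
  | n + 2 => (if Even (n + 2) then b * x else a * x) * bpFibP a b x (n + 1) + bpFibP a b x n

lemma bpFibP_add_two (a b x : ℝ) (k : ℕ) :
    bpFibP a b x (k + 2) =
      (if Even (k + 2) then b * x else a * x) * bpFibP a b x (k + 1) + bpFibP a b x k := rfl

lemma bpFibP_add_add_one (a b x : ℝ) (m n : ℕ) (h : Even (m + (n + 1))) :
    bpFibP a b x (m + (n + 1)) =
      bpFibP a b x (m + 1) * bpFibP a b x (n + 1) + bpFibP a b x m * bpFibP a b x n := by
  induction n generalizing m with
  | zero => simp [bpFibP]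
  | succ n ih =>
    have hparity : Even (m + 2) ↔ Even (n + 2) := by
      rw [Nat.even_iff, Nat.even_iff] at *; omega
    have hshift : m + (n + 1 + 1) = m + 1 + (n + 1) := by omega
    rw [hshift] at h ⊢
    calc bpFibP a b x (m + 1 + (n + 1))
        = bpFibP a b x (m + 2) * bpFibP a b x (n + 1) + bpFibP a b x (m + 1) * bpFibP a b x n :=
          ih (m + 1) h
      _ = bpFibP a b x (m + 1) * bpFibP a b x (n + 2) + bpFibP a b x m * bpFibP a b x (n + 1) := by
          rw [bpFibP_add_two a b x m, bpFibP_add_two a b x n, if_congr hparity rfl rfl]; ring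

theorem bpFibP_add_even_general (a b x : ℝ) (m n : ℕ)
    (hn : 1 ≤ n) (h : Even (m + n)) :
    bpFibP a b x (m + n) =
      bpFibP a b x (m + 1) * bpFibP a b x n + bpFibP a b x m * bpFibP a b x (n - 1) := by
  obtain ⟨k, rfl⟩ := Nat.exists_eq_add_of_le' hn
  exact bpFibP_add_add_one a b x m k h

theorem bpFibP_add_even (a b x : ℝ) (ha : a ≠ 0) (hb : b ≠ 0) (m n : ℕ)
    (hm : 1 ≤ m) (hn : 1 ≤ n) (h : Even (m + n)) :
    bpFibP a b x (m + n) =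
      bpFibP a b x (m + 1) * bpFibP a b x n + bpFibP a b x m * bpFibP a b x (n - 1) :=
  bpFibP_add_even_general a b x m n hn h
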